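/- Let A ⊆ ℕ^n be an affine semigroup and suppose Ā = *pA for some prime p. Then either *qA = ⁺A for every prime q ≠ p, or *qA = Ā for every prime q ≠ p. -/

import Mathlib

/-- The coordinatewise embedding of `ℤ^n` into `ℝ^n`. -/
noncomputable def toR {n : ℕ} (v : Fin n → ℤ) : Fin n → ℝ := fun i => (v i : ℝ)

/-- The normalization (saturation) `Ā` of an affine semigroup `A ⊆ ℤ^n`:
the elements `v` of the group `G(A)` generated by `A` such that `m • v ∈ A`
for some positive integer `m`. -/
def normalization {n : ℕ} (A : AddSubmonoid (Fin n → ℤ)) : Set (Fin n → ℤ) :=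
  {v | v ∈ AddSubgroup.closure (A : Set (Fin n → ℤ)) ∧ ∃ m : ℕ, 0 < m ∧ m • v ∈ A}

/-- The seminormalization `⁺A`: elements `v ∈ G(A)` with `m • v ∈ A` and `m' • v ∈ A`
for some coprime positive integers `m, m'`. -/
def seminormalization {n : ℕ} (A : AddSubmonoid (Fin n → ℤ)) : Set (Fin n → ℤ) :=
  {v | v ∈ AddSubgroup.closure (A : Set (Fin n → ℤ)) ∧
    ∃ m m' : ℕ, 0 < m ∧ 0 < m' ∧ Nat.Coprime m m' ∧ m • v ∈ A ∧ m' • v ∈ A}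

/-- The `p`-weak normalization `*pA`: elements `v ∈ Ā` with `p ^ e • v ∈ A` for some `e`. -/
def pWeakNormalization {n : ℕ} (A : AddSubmonoid (Fin n → ℤ)) (p : ℕ) : Set (Fin n → ℤ) :=
  {v | v ∈ normalization A ∧ ∃ e : ℕ, p ^ e • v ∈ A}

/-- The quotient `⟦A/m⟧ = {v ∈ Ā : m • v ∈ A}`. -/
def quotBy {n : ℕ} (A : AddSubmonoid (Fin n → ℤ)) (m : ℕ) : Set (Fin n → ℤ) :=
  {v | v ∈ normalization A ∧ m • v ∈ A}

/-!
If `v ∈ *qA` with `q ≠ p`, then `v ∈ Ā = *pA`, so `q ^ e • v` and `p ^ e' • v` lie in `A` with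
coprime multipliers, i.e. `v ∈ ⁺A`. Conversely, if `m • v, m' • v ∈ A` with `m, m'` coprime, then
every `N ≥ (m - 1) * (m' - 1)` is a nonnegative combination of `m` and `m'` (the coin problem), so
`N • v ∈ A`; taking `N` a large power of `q` gives `v ∈ *qA`. Hence the first alternative always
holds.
-/

theorem AddSubmonoid.nsmul_mem_of_coprime {M : Type*} [AddMonoid M] (S : AddSubmonoid M)
    {v : M} {m m' N : ℕ} (hcop : m.Coprime m') (hm : m • v ∈ S) (hm' : m' • v ∈ S)
    (hN : m.pred * m'.pred ≤ N) : N • v ∈ S := by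
  obtain ⟨a, b, rfl⟩ := Nat.exists_add_mul_eq_of_gcd_dvd_of_mul_pred_le m m' N
    (by simp [hcop.gcd_eq_one]) hN
  rw [add_nsmul, mul_nsmul', mul_nsmul']
  exact S.add_mem (S.nsmul_mem hm a) (S.nsmul_mem hm' b)

section WeakNormalization

variable {n : ℕ} (A : AddSubmonoid (Fin n → ℤ))

theorem seminormalization_subset_pWeakNormalization {q : ℕ} (hq : 1 < q) :
    seminormalization A ⊆ pWeakNormalization A q := by
  rintro v ⟨hG, m, m', hm, -, hcop, hmA, hm'A⟩
  exact ⟨⟨hG, m, hm, hmA⟩, _, A.nsmul_mem_of_coprime hcop hmA hm'A (Nat.lt_pow_self hq).le⟩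

theorem pWeakNormalization_inter_subset_seminormalization {p q : ℕ} (hp : p.Prime)
    (hq : q.Prime) (hpq : p ≠ q) :
    pWeakNormalization A p ∩ pWeakNormalization A q ⊆ seminormalization A := by
  rintro v ⟨⟨hnorm, e, hpA⟩, -, e', hqA⟩
  exact ⟨hnorm.1, p ^ e, q ^ e', pow_pos hp.pos e, pow_pos hq.pos e',
    ((Nat.coprime_primes hp hq).2 hpq).pow e e', hpA, hqA⟩

end WeakNormalization

theorem stmt10_general (n : ℕ) (A : AddSubmonoid (Fin n → ℤ)) (p : ℕ) (hp : p.Prime)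
    (h : normalization A = pWeakNormalization A p) :
    (∀ q : ℕ, q.Prime → q ≠ p → pWeakNormalization A q = seminormalization A) ∨
    (∀ q : ℕ, q.Prime → q ≠ p → pWeakNormalization A q = normalization A) := by
  refine Or.inl fun q hq hqp => Set.Subset.antisymm (fun v hv => ?_)
    (seminormalization_subset_pWeakNormalization A hq.one_lt)
  have hvp : v ∈ pWeakNormalization A p := h ▸ hv.1
  exact pWeakNormalization_inter_subset_seminormalization A hp hq hqp.symm ⟨hvp, hv⟩

/-- if `Ā = *pA` for some prime `p`, then either `*qA = ⁺A` for every
prime `q ≠ p`, or `*qA = Ā` for every prime `q ≠ p`. -/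
theorem stmt10 (n : ℕ) (A : AddSubmonoid (Fin n → ℤ)) (hFG : A.FG)
    (hnonneg : ∀ v ∈ A, ∀ i, 0 ≤ v i) (p : ℕ) (hp : p.Prime)
    (h : normalization A = pWeakNormalization A p) :
    (∀ q : ℕ, q.Prime → q ≠ p → pWeakNormalization A q = seminormalization A) ∨
    (∀ q : ℕ, q.Prime → q ≠ p → pWeakNormalization A q = normalization A) :=
  stmt10_general n A p hp h
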